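/- The lemniscatic period Π := (1/4)·∫₀¹ s^{−3/4}·(1−s)^{−1/2} ds (a convergent improper real integral) satisfies Π = √(π³/8) / Γ(3/4)², where Γ is the real Gamma function. -/

import Mathlib

/-!
The integral is the Euler Beta integral `B(1/4, 1/2) = Γ(1/4) Γ(1/2) / Γ(3/4)`. With
`Γ(1/2) = √π` and the reflection formula `Γ(1/4) Γ(3/4) = π / sin (π/4) = π √2`, this becomes
`π √(2π) / Γ(3/4)²`, and a quarter of it is `√(π³/8) / Γ(3/4)²`.
-/

open Real

theorem intervalIntegral_rpow_mul_one_sub_rpow_eq_Gamma {a b : ℝ} (ha : 0 < a) (hb : 0 < b) :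
    ∫ s in (0:ℝ)..1, s ^ (a - 1) * (1 - s) ^ (b - 1) = Gamma a * Gamma b / Gamma (a + b) := by
  have hbeta := Complex.betaIntegral_eq_Gamma_mul_div a b (by simpa) (by simpa)
  rw [Complex.betaIntegral] at hbeta
  apply Complex.ofReal_injective
  push_cast [← Complex.Gamma_ofReal]
  rw [← hbeta, ← intervalIntegral.integral_ofReal]
  refine intervalIntegral.integral_congr fun s hs => ?_
  rw [Set.uIcc_of_le zero_le_one] at hs
  push_cast
  rw [Complex.ofReal_cpow hs.1, Complex.ofReal_cpow (sub_nonneg.2 hs.2)]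
  push_cast
  rfl

theorem Gamma_one_fourth_mul_Gamma_three_fourths : Gamma (1 / 4) * Gamma (3 / 4) = π * √2 := by
  have hreflection := Gamma_mul_Gamma_one_sub (1 / 4)
  rw [show (1:ℝ) - 1 / 4 = 3 / 4 by norm_num, show π * (1 / 4) = π / 4 by ring,
    sin_pi_div_four] at hreflection
  rw [hreflection]
  field_simp
  rw [sq_sqrt zero_le_two]

theorem sqrt_pi_cube_div_eight : √(π ^ 3 / 8) = π * √π * √2 / 4 := by
  rw [← sqrt_sq (by positivity : 0 ≤ π * √π * √2 / 4)]
  congr 1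
  rw [div_pow, mul_pow, mul_pow, sq_sqrt zero_le_two, sq_sqrt pi_pos.le]
  ring

theorem lemniscatic_period_eval :
    (1 / 4 : ℝ) * ∫ s in (0:ℝ)..1, s ^ (-(3 / 4 : ℝ)) * (1 - s) ^ (-(1 / 2 : ℝ)) =
      Real.sqrt (Real.pi ^ 3 / 8) / Real.Gamma (3 / 4) ^ 2 := by
  have hbeta : ∫ s in (0:ℝ)..1, s ^ (-(3 / 4 : ℝ)) * (1 - s) ^ (-(1 / 2 : ℝ)) =
      Gamma (1 / 4) * Gamma (1 / 2) / Gamma (3 / 4) := by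
    convert intervalIntegral_rpow_mul_one_sub_rpow_eq_Gamma (a := 1 / 4) (b := 1 / 2)
      (by norm_num) (by norm_num) using 4 <;> norm_num
  have hGamma : 0 < Gamma (3 / 4) := Gamma_pos_of_pos (by norm_num)
  rw [hbeta, Gamma_one_half_eq, sqrt_pi_cube_div_eight]
  field_simp
  linear_combination Gamma_one_fourth_mul_Gamma_three_fourths
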